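/- For v > n, the set of ξ ∈ ℝ^n such that ‖q·ξ‖ < |q|^{-v} for infinitely many nonzero q ∈ ℤ^n (where |q| = max_i |q_i| and q·ξ is the standard inner product) has Lebesgue measure zero. -/

import Mathlib

/-
Borel–Cantelli on each box `max_i |ξ_i| ≤ R`. For `q ≠ 0` the set of `ξ` in the box with
`‖q·ξ‖ < ε` has measure `O_R(ε)` uniformly in `q`: replacing the coordinate `ξ_i` with
`|q_i| = |q|` by `q·ξ` is a linear change of variables of determinant `q_i` that turns this set
into a product, and the Jacobian `1/|q|` cancels the `O(|q|)` unit intervals swept by `q·ξ`.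
Since `ℤⁿ` is a lattice of rank `n` in `ℝⁿ`, `∑_{q ≠ 0} |q|^{-v}` converges for `v > n`.
-/

/-- Distance from a real number to the nearest integer. -/
noncomputable def nint (x : ℝ) : ℝ := |x - round x|

/-- The height `|q| = max_i |q_i|` of an integer vector. -/
def height {n : ℕ} (q : Fin n → ℤ) : ℕ := Finset.univ.sup fun i => (q i).natAbs

open MeasureTheory Metric Module

section Height

variable {n : ℕ}

lemma natAbs_le_height (q : Fin n → ℤ) (i : Fin n) : (q i).natAbs ≤ height q :=
  Finset.le_sup (f := fun i => (q i).natAbs) (Finset.mem_univ i)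

lemma abs_intCast_le_height (q : Fin n → ℤ) (i : Fin n) : |(q i : ℝ)| ≤ height q := by
  simpa [Nat.cast_natAbs, Int.cast_abs] using (Nat.cast_le (α := ℝ)).2 (natAbs_le_height q i)

lemma one_le_height {q : Fin n → ℤ} (hq : q ≠ 0) : 1 ≤ height q := by
  obtain ⟨i, hi⟩ := Function.ne_iff.mp hq
  exact (Int.natAbs_pos.mpr hi).trans_le (natAbs_le_height q i)

lemma exists_natAbs_eq_height {q : Fin n → ℤ} (hq : q ≠ 0) : ∃ i, (q i).natAbs = height q := by
  obtain ⟨i, -⟩ := Function.ne_iff.mp hq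
  have : Nonempty (Fin n) := ⟨i⟩
  obtain ⟨i₀, -, h⟩ := Finset.exists_mem_eq_sup Finset.univ Finset.univ_nonempty
    fun i => (q i).natAbs
  exact ⟨i₀, h.symm⟩

lemma norm_intCast_eq_height (q : Fin n → ℤ) : ‖fun i => (q i : ℝ)‖ = height q := by
  refine le_antisymm ((pi_norm_le_iff_of_nonneg (by positivity)).2 (abs_intCast_le_height q)) ?_
  rcases eq_or_ne q 0 with rfl | hq
  · rw [show height (0 : Fin n → ℤ) = 0 by simp [height]]
    simp
  obtain ⟨i, hi⟩ := exists_natAbs_eq_height hq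
  rw [← hi]
  simpa [Nat.cast_natAbs, Int.cast_abs] using norm_le_pi_norm (fun i => (q i : ℝ)) i

lemma abs_sum_mul_le_of_mem_closedBall (q : Fin n → ℤ) {R : ℝ} {ξ : Fin n → ℝ}
    (hξ : ξ ∈ closedBall 0 R) : |∑ i, (q i : ℝ) * ξ i| ≤ n * height q * R := by
  rw [mem_closedBall_zero_iff] at hξ
  calc |∑ i, (q i : ℝ) * ξ i| ≤ ∑ i, |(q i : ℝ)| * |ξ i| := by
        simpa only [abs_mul] using Finset.abs_sum_le_sum_abs (fun i => (q i : ℝ) * ξ i) Finset.univ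
    _ ≤ ∑ _i : Fin n, (height q : ℝ) * R := by
        gcongr with i
        · exact abs_intCast_le_height q i
        · exact (norm_le_pi_norm ξ i).trans hξ
    _ = n * height q * R := by simp [mul_assoc]

lemma summable_height_rpow {v : ℝ} (hv : n < v) :
    Summable fun q : Fin n → ℤ => (height q : ℝ) ^ (-v) := by
  let L := Submodule.span ℤ (Set.range (Pi.basisFun ℝ (Fin n)))
  have : DiscreteTopology L := ZSpan.discreteTopology_pi_basisFun
  have hrank : finrank ℤ L = n := by
    rw [finrank_span_eq_card ((Pi.basisFun ℝ (Fin n)).linearIndependent.restrict_scalars' ℤ)]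
    simp
  let emb : (Fin n → ℤ) → L := fun q => ⟨fun i => (q i : ℝ), by
    rw [(Pi.basisFun ℝ (Fin n)).mem_span_iff_repr_mem ℤ]
    intro i
    simp⟩
  have hemb : Function.Injective emb := fun q q' h => by
    funext i
    simpa [emb] using congrFun (congrArg Subtype.val h) i
  have := (ZLattice.summable_norm_rpow L (-v) (by rw [hrank]; linarith)).comp_injective hemb
  simpa [Function.comp_def, emb, norm_intCast_eq_height] using this

end Height

lemma nint_lt_inter_closedBall_subset_iUnion_ball (N : ℕ) (ε : ℝ) :
    {s : ℝ | nint s < ε} ∩ closedBall 0 N ⊆ ⋃ k ∈ Finset.Icc (-N : ℤ) N, ball (k : ℝ) ε := by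
  rintro s ⟨hs, hsN⟩
  rw [mem_closedBall_zero_iff, Real.norm_eq_abs] at hsN
  have hround : |((round s : ℤ) : ℝ)| < (N : ℤ) + 1 := by
    have := abs_sub_round s
    have := abs_sub_abs_le_abs_sub (round s : ℝ) s
    push_cast
    linarith [abs_sub_comm s (round s)]
  have hk : round s ∈ Finset.Icc (-N : ℤ) N := by
    rw [Finset.mem_Icc, ← abs_le]
    exact Int.lt_add_one_iff.mp (by exact_mod_cast hround)
  exact Set.mem_biUnion hk (by rw [mem_ball, Real.dist_eq]; exact hs)

lemma volume_nint_lt_inter_closedBall_le (N : ℕ) (ε : ℝ) :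
    volume ({s : ℝ | nint s < ε} ∩ closedBall 0 N) ≤ (2 * N + 1) * ENNReal.ofReal (2 * ε) := by
  calc volume ({s : ℝ | nint s < ε} ∩ closedBall 0 N)
      ≤ volume (⋃ k ∈ Finset.Icc (-N : ℤ) N, ball (k : ℝ) ε) :=
        measure_mono (nint_lt_inter_closedBall_subset_iUnion_ball N ε)
    _ ≤ ∑ k ∈ Finset.Icc (-N : ℤ) N, volume (ball (k : ℝ) ε) := measure_biUnion_finset_le _ _
    _ = (2 * N + 1) * ENNReal.ofReal (2 * ε) := by
        have hcard : (Finset.Icc (-N : ℤ) N).card = 2 * N + 1 := by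
          rw [Int.card_Icc]; omega
        simp only [Real.volume_ball, Finset.sum_const, hcard, nsmul_eq_mul]
        push_cast
        rfl

lemma volume_pi_update_closedBall {ι : Type*} [Fintype ι] [DecidableEq ι] (i : ι) (B : Set ℝ)
    (R : ℝ) : volume (Set.univ.pi (Function.update (fun _ => closedBall (0 : ℝ) R) i B)) =
      volume B * ENNReal.ofReal (2 * R) ^ (Fintype.card ι - 1) := by
  have hrest : ∀ j ∈ Finset.univ \ {i},
      volume (Function.update (fun _ => closedBall (0 : ℝ) R) i B j) = ENNReal.ofReal (2 * R) := by
    intro j hj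
    rw [Function.update_of_ne (by simpa using hj), Real.volume_closedBall]
  have hcard : (Finset.univ \ {i}).card = Fintype.card ι - 1 := by
    rw [Finset.card_univ_sdiff, Finset.card_singleton]
  rw [volume_pi_pi, Finset.prod_eq_mul_prod_sdiff_singleton_of_mem (Finset.mem_univ i),
    Finset.prod_congr rfl hrest, Finset.prod_const, Function.update_self, hcard]

lemma Matrix.det_one_updateRow {ι R : Type*} [Fintype ι] [DecidableEq ι] [CommRing R]
    (i : ι) (r : ι → R) : ((1 : Matrix ι ι R).updateRow i r).det = r i := by
  have : r = ∑ k, r k • (1 : Matrix ι ι R) k := by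
    ext j
    simp [Matrix.one_apply]
  conv_lhs => rw [this, Matrix.det_updateRow_sum]
  simp

lemma Matrix.toLin'_one_updateRow {ι R : Type*} [Fintype ι] [DecidableEq ι] [CommRing R]
    (i : ι) (r ξ : ι → R) :
    Matrix.toLin' ((1 : Matrix ι ι R).updateRow i r) ξ = Function.update ξ i (r ⬝ᵥ ξ) := by
  rw [Matrix.toLin'_apply, Matrix.updateRow_mulVec, Matrix.one_mulVec]

lemma mapsTo_update_sum_mul {n : ℕ} (q : Fin n → ℤ) (i₀ : Fin n) (R ε : ℝ) :
    Set.MapsTo (fun ξ : Fin n → ℝ => Function.update ξ i₀ (∑ i, (q i : ℝ) * ξ i))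
      (closedBall 0 R ∩ {ξ | nint (∑ i, (q i : ℝ) * ξ i) < ε})
      (Set.univ.pi (Function.update (fun _ => closedBall 0 R) i₀
        ({s | nint s < ε} ∩ closedBall 0 (n * height q * R)))) := by
  rintro ξ ⟨hξR, hξε⟩ j -
  rcases eq_or_ne j i₀ with rfl | hj
  · simp only [Function.update_self]
    refine ⟨hξε, ?_⟩
    rw [mem_closedBall_zero_iff, Real.norm_eq_abs]
    exact abs_sum_mul_le_of_mem_closedBall q hξR
  · simp only [Function.update_of_ne hj]
    rw [mem_closedBall_zero_iff]
    exact (norm_le_pi_norm ξ j).trans (mem_closedBall_zero_iff.mp hξR)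

lemma volume_closedBall_inter_nint_lt_le {n : ℕ} {q : Fin n → ℤ} (hq : q ≠ 0) (R : ℕ) (ε : ℝ) :
    volume (closedBall (0 : Fin n → ℝ) R ∩ {ξ | nint (∑ i, (q i : ℝ) * ξ i) < ε}) ≤
      ENNReal.ofReal (2 * n * R + 1) * ENNReal.ofReal (2 * ε) *
        ENNReal.ofReal (2 * R) ^ (n - 1) := by
  obtain ⟨i₀, hi₀⟩ := exists_natAbs_eq_height hq
  have hh : (1 : ℝ) ≤ height q := by exact_mod_cast one_le_height hq
  set L := n * height q * R
  set T := Matrix.toLin' ((1 : Matrix (Fin n) (Fin n) ℝ).updateRow i₀ fun j => (q j : ℝ))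
  have hdet : |LinearMap.det T| = height q := by
    rw [LinearMap.det_toLin', Matrix.det_one_updateRow, ← hi₀]
    push_cast [Nat.cast_natAbs, Int.cast_abs]
    rfl
  set S : Set (Fin n → ℝ) := Set.univ.pi (Function.update (fun _ => closedBall 0 R) i₀
    ({s | nint s < ε} ∩ closedBall 0 (n * height q * R)))
  have hsub : closedBall 0 R ∩ {ξ | nint (∑ i, (q i : ℝ) * ξ i) < ε} ⊆ T ⁻¹' S := by
    intro ξ hξ
    rw [Set.mem_preimage, Matrix.toLin'_one_updateRow]
    exact mapsTo_update_sum_mul q i₀ R ε hξ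
  have hS : volume S ≤ (2 * L + 1) * ENNReal.ofReal (2 * ε) * ENNReal.ofReal (2 * R) ^ (n - 1) := by
    rw [volume_pi_update_closedBall, Fintype.card_fin]
    gcongr
    exact_mod_cast volume_nint_lt_inter_closedBall_le L ε
  have hcoef : ENNReal.ofReal (height q : ℝ)⁻¹ * (2 * L + 1) ≤ ENNReal.ofReal (2 * n * R + 1) := by
    rw [show (2 * L + 1 : ENNReal) = ENNReal.ofReal (2 * L + 1) by simp [ENNReal.ofReal_add],
      ← ENNReal.ofReal_mul (by positivity)]
    refine ENNReal.ofReal_le_ofReal ((inv_mul_le_iff₀ (by positivity)).2 ?_)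
    push_cast [L]
    nlinarith [mul_nonneg (Nat.cast_nonneg (α := ℝ) n) (Nat.cast_nonneg (α := ℝ) R)]
  calc volume (closedBall (0 : Fin n → ℝ) R ∩ {ξ | nint (∑ i, (q i : ℝ) * ξ i) < ε})
      ≤ volume (T ⁻¹' S) := measure_mono hsub
    _ = ENNReal.ofReal |(LinearMap.det T)⁻¹| * volume S :=
        Measure.addHaar_preimage_linearMap _ (abs_pos.mp (by rw [hdet]; linarith)) _
    _ ≤ ENNReal.ofReal (height q : ℝ)⁻¹ *
          ((2 * L + 1) * ENNReal.ofReal (2 * ε) * ENNReal.ofReal (2 * R) ^ (n - 1)) := by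
        rw [abs_inv, hdet]
        gcongr
    _ ≤ _ := by
        rw [← mul_assoc, ← mul_assoc]
        gcongr

lemma tsum_restrict_closedBall_nint_lt_ne_top {n : ℕ} {v : ℝ} (hv : n < v) (R : ℕ) :
    ∑' q : Fin n → ℤ, volume.restrict (closedBall (0 : Fin n → ℝ) R)
      {ξ | q ≠ 0 ∧ nint (∑ i, (q i : ℝ) * ξ i) < (height q : ℝ) ^ (-v)} ≠ ⊤ := by
  have hterm : ∀ q : Fin n → ℤ, volume.restrict (closedBall (0 : Fin n → ℝ) R)
      {ξ | q ≠ 0 ∧ nint (∑ i, (q i : ℝ) * ξ i) < (height q : ℝ) ^ (-v)} ≤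
      ENNReal.ofReal (2 * n * R + 1) * ENNReal.ofReal (2 * R) ^ (n - 1) *
        ENNReal.ofReal (2 * (height q : ℝ) ^ (-v)) := by
    intro q
    rcases eq_or_ne q 0 with rfl | hq
    · simp
    rw [Measure.restrict_apply' measurableSet_closedBall, Set.inter_comm]
    refine (measure_mono (Set.inter_subset_inter_right _ fun ξ hξ => hξ.2)).trans ?_
    exact (volume_closedBall_inter_nint_lt_le hq R _).trans_eq (by ring)
  refine ne_top_of_le_ne_top ?_ (ENNReal.tsum_le_tsum hterm)
  rw [ENNReal.tsum_mul_left, ← ENNReal.ofReal_tsum_of_nonneg (fun q => by positivity)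
    ((summable_height_rpow hv).mul_left 2)]
  exact ENNReal.mul_ne_top (by finiteness) ENNReal.ofReal_ne_top

theorem dual_approx_null_general (n : ℕ) (v : ℝ) (hv : (n : ℝ) < v) :
    MeasureTheory.volume
      {ξ : Fin n → ℝ |
        {q : Fin n → ℤ | q ≠ 0 ∧
          nint (∑ i, (q i : ℝ) * ξ i) < (height q : ℝ) ^ (-v)}.Infinite} = 0 := by
  have hfin : ∀ᵐ ξ : Fin n → ℝ, {q : Fin n → ℤ | q ≠ 0 ∧
      nint (∑ i, (q i : ℝ) * ξ i) < (height q : ℝ) ^ (-v)}.Finite := by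
    rw [← Measure.restrict_univ (μ := volume), ← iUnion_closedBall_nat 0, ae_restrict_iUnion_iff]
    exact fun R => ae_finite_setOfPred_mem (tsum_restrict_closedBall_nint_lt_ne_top hv R)
  exact ae_iff.mp hfin

theorem dual_approx_null (n : ℕ) (hn : 0 < n) (v : ℝ) (hv : (n : ℝ) < v) :
    MeasureTheory.volume
      {ξ : Fin n → ℝ |
        {q : Fin n → ℤ | q ≠ 0 ∧
          nint (∑ i, (q i : ℝ) * ξ i) < (height q : ℝ) ^ (-v)}.Infinite} = 0 :=
  dual_approx_null_general n v hv
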